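/- arXiv:1106.4776 — 3 statements merged into one kernel-verified Lean document; each statement's English description precedes it below -/
import Mathlib

section
/- The function u is differentiable at every point z of the sector S, and its differential satisfies the bound ‖Du(z)‖ ≤ 5/‖z‖ for all z ∈ S. (This is the key estimate in the proof of Lemma 4.2: the primitive η = (1/2)(∂̄ − ∂) log(1 + Σ|z_j|²/|z₀|²) of the pulled-back Fubini–Study form has comass ‖η‖* ≤ C/ρ, where ρ is the distance from the origin.) -/
open Metric

/-- The sector `S = {(z₀, z') : ‖z'‖ < |z₀|}` inside `ℂ × ℂⁿ`, the latter being
equipped with the Euclidean (l²) norm `‖(z₀, z')‖² = |z₀|² + ‖z'‖²`. -/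
def sector (n : ℕ) : Set (WithLp 2 (ℂ × EuclideanSpace ℂ (Fin n))) :=
  {z | ‖z.ofLp.2‖ < ‖z.ofLp.1‖}

/-- The potential `u(z₀, z') = log(1 + ‖z'‖²/|z₀|²)` whose differential gives the
primitive `η = ½(∂̄ − ∂)u` of the pulled-back Fubini–Study form. -/
noncomputable def sectorPotential (n : ℕ)
    (z : WithLp 2 (ℂ × EuclideanSpace ℂ (Fin n))) : ℝ :=
  Real.log (1 + ‖z.ofLp.2‖ ^ 2 / ‖z.ofLp.1‖ ^ 2)

/-!
Where `z₀ ≠ 0`, `u(z) = log ‖z‖² - log |z₀|²`. The differential of `log ‖f‖²` is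
`2 ⟨f, Df ·⟩ / ‖f‖²`, of norm at most `2 ‖Df‖ / ‖f‖`; with `f` the identity and the projection
`z ↦ z₀` this gives `‖Du(z)‖ ≤ 2/‖z‖ + 2/|z₀|`. On the sector `‖z‖² < 2 |z₀|²`, and
`2 + 2√2 < 5`.
-/

open Filter Topology

section LogNormSq

variable {E F : Type*} [NormedAddCommGroup E] [NormedSpace ℝ E]
  [NormedAddCommGroup F] [InnerProductSpace ℝ F]

theorem HasFDerivAt.log_norm_sq {f : E → F} {f' : E →L[ℝ] F} {x : E}
    (hf : HasFDerivAt f f' x) (hx : f x ≠ 0) :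
    HasFDerivAt (fun w => Real.log (‖f w‖ ^ 2))
      ((‖f x‖ ^ 2)⁻¹ • (2 • (innerSL ℝ (f x)).comp f')) x :=
  hf.norm_sq.log (by positivity)

theorem norm_inv_norm_sq_smul_innerSL_comp_le (y : F) (f' : E →L[ℝ] F) :
    ‖(‖y‖ ^ 2)⁻¹ • (2 • (innerSL ℝ y).comp f')‖ ≤ 2 * ‖f'‖ / ‖y‖ := by
  rcases eq_or_ne y 0 with rfl | hy
  · simp
  have hy : 0 < ‖y‖ := norm_pos_iff.mpr hy
  calc ‖(‖y‖ ^ 2)⁻¹ • (2 • (innerSL ℝ y).comp f')‖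
      = (‖y‖ ^ 2)⁻¹ * ‖(2 : ℕ) • (innerSL ℝ y).comp f'‖ := by
        rw [norm_smul, norm_inv, norm_pow, norm_norm]
    _ ≤ (‖y‖ ^ 2)⁻¹ * (2 * (‖y‖ * ‖f'‖)) := by
        gcongr
        refine (norm_nsmul_le (n := 2) (a := (innerSL ℝ y).comp f')).trans ?_
        simpa only [innerSL_apply_norm, Nat.cast_ofNat] using
          mul_le_mul_of_nonneg_left ((innerSL ℝ y).opNorm_comp_le f') zero_le_two
    _ = 2 * ‖f'‖ / ‖y‖ := by field_simp

end LogNormSq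

namespace WithLp

variable {α β : Type*} [NormedAddCommGroup α] [NormedAddCommGroup β]

theorem prod_norm_sq_lt_two_mul_norm_fst_sq {x : WithLp 2 (α × β)} (hx : ‖x.snd‖ < ‖x.fst‖) :
    ‖x‖ ^ 2 < 2 * ‖x.fst‖ ^ 2 := by
  rw [prod_norm_sq_eq_of_L2]
  nlinarith [norm_nonneg x.snd]

theorem opNorm_fstL_le_one (𝕜 : Type*) [NontriviallyNormedField 𝕜] [NormedSpace 𝕜 α]
    [NormedSpace 𝕜 β] : ‖fstL 2 𝕜 α β‖ ≤ 1 :=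
  ContinuousLinearMap.opNorm_le_bound _ zero_le_one fun w => by
    simpa using norm_fst_le _ w

end WithLp

section Sector

variable {n : ℕ}

theorem sectorPotential_eq_log_sub {w : WithLp 2 (ℂ × EuclideanSpace ℂ (Fin n))}
    (hw : w.fst ≠ 0) :
    sectorPotential n w = Real.log (‖w‖ ^ 2) - Real.log (‖w.fst‖ ^ 2) := by
  have hw : 0 < ‖w.fst‖ ^ 2 := by positivity
  rw [← Real.log_div (by rw [WithLp.prod_norm_sq_eq_of_L2]; positivity) hw.ne',
    WithLp.prod_norm_sq_eq_of_L2, add_div, div_self hw.ne']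
  rfl

theorem hasFDerivAt_sectorPotential {z : WithLp 2 (ℂ × EuclideanSpace ℂ (Fin n))}
    (hz : z.fst ≠ 0) :
    HasFDerivAt (sectorPotential n)
      ((‖z‖ ^ 2)⁻¹ • (2 • (innerSL ℝ z).comp (ContinuousLinearMap.id ℝ _)) -
        (‖z.fst‖ ^ 2)⁻¹ • (2 • (innerSL ℝ z.fst).comp (WithLp.fstL 2 ℝ _ _))) z := by
  have hzero : z ≠ 0 := by rintro rfl; exact hz rfl
  have hnear : ∀ᶠ w in 𝓝 z, w.fst ≠ 0 :=
    (WithLp.fstL 2 ℝ ℂ (EuclideanSpace ℂ (Fin n))).continuous.continuousAt.eventually_ne hz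
  refine ((hasFDerivAt_id z).log_norm_sq hzero |>.sub
    ((WithLp.fstL 2 ℝ _ _).hasFDerivAt.log_norm_sq hz)).congr_of_eventuallyEq ?_
  filter_upwards [hnear] with w hw
  exact sectorPotential_eq_log_sub hw

end Sector

/-- **Comass estimate for the primitive of the pulled-back Fubini–Study form**
(key estimate in the proof of Lemma 4.2): the function
`u(z₀,z') = log(1 + ‖z'‖²/|z₀|²)` is differentiable at every point of the
sector `S = {‖z'‖ < |z₀|}` and its differential satisfies `‖Du(z)‖ ≤ 5/‖z‖`. -/
theorem fubiniStudy_primitive_derivative_bound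
    (n : ℕ) (z : WithLp 2 (ℂ × EuclideanSpace ℂ (Fin n)))
    (hz : z ∈ sector n) :
    DifferentiableAt ℝ (sectorPotential n) z ∧
      ‖fderiv ℝ (sectorPotential n) z‖ ≤ 5 / ‖z‖ := by
  have hz : ‖z.snd‖ < ‖z.fst‖ := hz
  have hfst : 0 < ‖z.fst‖ := (norm_nonneg _).trans_lt hz
  have hnorm : 0 < ‖z‖ := hfst.trans_le (WithLp.norm_fst_le _ z)
  have hu := hasFDerivAt_sectorPotential (norm_pos_iff.mp hfst)
  refine ⟨hu.differentiableAt, ?_⟩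
  have hsq := WithLp.prod_norm_sq_lt_two_mul_norm_fst_sq hz
  calc ‖fderiv ℝ (sectorPotential n) z‖
      ≤ 2 * 1 / ‖z‖ + 2 * 1 / ‖z.fst‖ := by
        rw [hu.fderiv]
        refine (norm_sub_le _ _).trans (add_le_add ?_ ?_) <;>
          refine (norm_inv_norm_sq_smul_innerSL_comp_le _ _).trans ?_ <;> gcongr
        exacts [ContinuousLinearMap.norm_id_le, WithLp.opNorm_fstL_le_one ℝ]
    _ ≤ 5 / ‖z‖ := by
        rw [div_add_div _ _ hnorm.ne' hfst.ne', div_le_div_iff₀ (by positivity) hnorm]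
        nlinarith [mul_pos hnorm hfst]
end

section
/- If μ is almost monotone at a point x with constants r₀ > 0 and C ≥ 0, then the 2-dimensional density ν(x) := lim_{r→0⁺} μ(B(x, r))/(π·r²) exists and is finite. (Existence of the density, or Lelong number, at every point for an almost monotone mass measure.) -/
/-!
The ratio `μ(B(x,r))/(πr²)` is nonnegative and within `C r` of `R`, so `R` is bounded below on
`(0, r₀)`; being monotone, it converges to its infimum as `r → 0⁺`, and the ratio, whose
distance to `R` tends to `0`, converges to the same limit.
-/

open Metric MeasureTheory Filter Real Set Topology

section

variable {f g : ℝ → ℝ} {m r₀ C : ℝ}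

theorem tendsto_nhdsGT_zero_of_abs_sub_le_mul (hr₀ : 0 < r₀)
    (hfg : ∀ r ∈ Ioo 0 r₀, |f r - g r| ≤ C * r) {L : ℝ} (hg : Tendsto g (𝓝[>] 0) (𝓝 L)) :
    Tendsto f (𝓝[>] 0) (𝓝 L) := by
  have hCr : Tendsto (fun r : ℝ => C * r) (𝓝[>] 0) (𝓝 0) := by
    simpa using ((continuous_const_mul C).tendsto 0).mono_left nhdsWithin_le_nhds
  refine hg.congr_dist (squeeze_zero' (.of_forall fun _ => dist_nonneg) ?_ hCr)
  filter_upwards [Ioo_mem_nhdsGT hr₀] with r hr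
  rw [dist_comm, Real.dist_eq]
  exact hfg r hr

theorem bddBelow_image_of_abs_sub_le_mul (hf : ∀ r ∈ Ioo 0 r₀, m ≤ f r)
    (hfg : ∀ r ∈ Ioo 0 r₀, |f r - g r| ≤ C * r) : BddBelow (g '' Ioo 0 r₀) := by
  refine ⟨m - |C| * r₀, ?_⟩
  rintro _ ⟨r, hr, rfl⟩
  have hCr : C * r ≤ |C| * r₀ :=
    (mul_le_mul_of_nonneg_right (le_abs_self C) hr.1.le).trans
      (mul_le_mul_of_nonneg_left hr.2.le (abs_nonneg C))
  linarith [hf r hr, (abs_le.1 (hfg r hr)).2]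

theorem exists_tendsto_nhdsGT_zero_of_almost_monotoneOn (hr₀ : 0 < r₀)
    (hf : ∀ r ∈ Ioo 0 r₀, m ≤ f r) (hg : MonotoneOn g (Ioo 0 r₀))
    (hfg : ∀ r ∈ Ioo 0 r₀, |f r - g r| ≤ C * r) :
    ∃ L, Tendsto f (𝓝[>] 0) (𝓝 L) :=
  ⟨_, tendsto_nhdsGT_zero_of_abs_sub_le_mul hr₀ hfg <|
    hg.tendsto_nhdsWithin_Ioo_right (nonempty_Ioo.2 hr₀) (bddBelow_image_of_abs_sub_le_mul hf hfg)⟩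

end

theorem density_exists_of_almost_monotone_general
    (d : ℕ) (μ : Measure (EuclideanSpace ℝ (Fin d)))
    (x : EuclideanSpace ℝ (Fin d)) (r₀ C : ℝ) (hr₀ : 0 < r₀)
    (R : ℝ → ℝ) (hR : MonotoneOn R (Set.Ioo 0 r₀))
    (hmon : ∀ r ∈ Set.Ioo (0 : ℝ) r₀,
      |(μ (ball x r)).toReal / (π * r ^ 2) - R r| ≤ C * r) :
    ∃ ν : ℝ, Tendsto (fun r : ℝ => (μ (ball x r)).toReal / (π * r ^ 2))
      (nhdsWithin 0 (Set.Ioi 0)) (nhds ν) :=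
  exists_tendsto_nhdsGT_zero_of_almost_monotoneOn hr₀
    (fun _ _ => div_nonneg ENNReal.toReal_nonneg (by positivity)) hR hmon

/-- **Existence of the 2-dimensional density (Lelong number).**
If a finite Borel measure `μ` on `ℝ^d` is almost monotone at `x` with
constants `r₀ > 0`, `C ≥ 0` — i.e. there is a nondecreasing
`R : (0, r₀) → ℝ` with `|μ(B(x,r))/(π r²) − R(r)| ≤ C r` for `r ∈ (0, r₀)` —
then the density `ν(x) = lim_{r→0⁺} μ(B(x,r))/(π r²)` exists and is finite. -/
theorem density_exists_of_almost_monotone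
    (d : ℕ) (μ : Measure (EuclideanSpace ℝ (Fin d))) [IsFiniteMeasure μ]
    (x : EuclideanSpace ℝ (Fin d)) (r₀ C : ℝ) (hr₀ : 0 < r₀) (hC : 0 ≤ C)
    (R : ℝ → ℝ) (hR : MonotoneOn R (Set.Ioo 0 r₀))
    (hmon : ∀ r ∈ Set.Ioo (0 : ℝ) r₀,
      |(μ (ball x r)).toReal / (π * r ^ 2) - R r| ≤ C * r) :
    ∃ ν : ℝ, Tendsto (fun r : ℝ => (μ (ball x r)).toReal / (π * r ^ 2))
      (nhdsWithin 0 (Set.Ioi 0)) (nhds ν) :=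
  density_exists_of_almost_monotone_general d μ x r₀ C hr₀ R hR hmon
end

section
/- Let U ⊆ ℝ^d be open and suppose μ is almost monotone at every x ∈ U with the same constants r₀ > 0 and C ≥ 0 (independent of the point). Then the density function ν(x) := lim_{r→0⁺} μ(B(x, r))/(π·r²) is well defined and upper semicontinuous on U. (The paper's claim: since r₀ and C do not depend on the point, the density ν is an upper semicontinuous function.) -/
/-!
An almost monotone function `R` forces the density ratio `μ(B(x,r))/(πr²)` to converge as
`r → 0⁺`, and its limit satisfies `ν(x) ≤ μ(B(x,r))/(πr²) + C r` for all `r < r₀`, with `r₀`, `C`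
independent of `x`. Since `B(z, ts) ⊆ B(x, s)` whenever `|z - x| ≤ (1 - t) s`, this gives
`ν(z) ≤ t⁻² μ(B(x,s))/(πs²) + C t s` for `z` near `x`; letting `s → 0⁺` and then `t → 1⁻`
yields `limsup_{z → x} ν(z) ≤ ν(x)`.
-/

open Metric MeasureTheory Filter Real Set Topology

theorem exists_tendsto_nhdsGT_zero_of_abs_sub_le_of_monotoneOn {f R : ℝ → ℝ} {r₀ C : ℝ}
    (hr₀ : 0 < r₀) (hC : 0 ≤ C) (hR : MonotoneOn R (Ioo 0 r₀))
    (hf : ∀ r ∈ Ioo 0 r₀, 0 ≤ f r) (hfR : ∀ r ∈ Ioo 0 r₀, |f r - R r| ≤ C * r) :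
    ∃ L, Tendsto f (𝓝[>] 0) (𝓝 L) ∧ ∀ r ∈ Ioo 0 r₀, L ≤ f r + C * r := by
  have hR_ge : ∀ r ∈ Ioo 0 r₀, f r - C * r ≤ R r := fun r hr => by
    linarith [(abs_le.1 (hfR r hr)).2]
  have hbdd : BddBelow (R '' Ioo 0 r₀) := by
    refine ⟨-(C * r₀), ?_⟩
    rintro _ ⟨r, hr, rfl⟩
    nlinarith [hR_ge r hr, hf r hr, hr.2]
  have hR_lim := hR.tendsto_nhdsWithin_Ioo_right (nonempty_Ioo.2 hr₀) hbdd
  have hdiff_lim : Tendsto (fun r => f r - R r) (𝓝[>] 0) (𝓝 0) := by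
    have hCr : Tendsto (fun r : ℝ => C * r) (𝓝[>] 0) (𝓝 0) := by
      simpa using (tendsto_id.const_mul C).mono_left (nhdsWithin_le_nhds (a := (0 : ℝ)))
    refine squeeze_zero_norm' ?_ hCr
    filter_upwards [Ioo_mem_nhdsGT hr₀] with r hr using hfR r hr
  refine ⟨_, by simpa using hdiff_lim.add hR_lim, fun r hr => ?_⟩
  linarith [csInf_le hbdd (mem_image_of_mem R hr), (abs_le.1 (hfR r hr)).1]

section BallDensityRatio

variable {X : Type*} [PseudoMetricSpace X] [MeasurableSpace X] (μ : Measure X)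

noncomputable def ballDensityRatio (x : X) (r : ℝ) : ℝ :=
  (μ (ball x r)).toReal / (π * r ^ 2)

theorem ballDensityRatio_nonneg (x : X) (r : ℝ) : 0 ≤ ballDensityRatio μ x r := by
  unfold ballDensityRatio
  positivity

theorem ballDensityRatio_le_of_dist_le [IsFiniteMeasure μ] {x z : X} {s t : ℝ}
    (hz : dist z x ≤ (1 - t) * s) :
    ballDensityRatio μ z (t * s) ≤ ballDensityRatio μ x s / t ^ 2 := by
  have hball : ball z (t * s) ⊆ ball x s := ball_subset_ball' (by linarith)
  calc ballDensityRatio μ z (t * s) ≤ (μ (ball x s)).toReal / (π * (t * s) ^ 2) := by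
        unfold ballDensityRatio
        gcongr
        exact measure_ne_top μ _
    _ = ballDensityRatio μ x s / t ^ 2 := by
        unfold ballDensityRatio
        ring

theorem upperSemicontinuousOn_of_le_ballDensityRatio_add [IsFiniteMeasure μ] {ν : X → ℝ}
    {U : Set X} {r₀ C : ℝ} (hr₀ : 0 < r₀)
    (hν : ∀ x ∈ U, Tendsto (ballDensityRatio μ x) (𝓝[>] 0) (𝓝 (ν x)))
    (hle : ∀ z ∈ U, ∀ r ∈ Ioo 0 r₀, ν z ≤ ballDensityRatio μ z r + C * r) :
    UpperSemicontinuousOn ν U := by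
  intro x hx y hy
  obtain ⟨t, ⟨ht₀, ht₁⟩, hty⟩ : ∃ t ∈ Ioo (0 : ℝ) 1, ν x / t ^ 2 < y := by
    have hcont : ContinuousAt (fun t : ℝ => ν x / t ^ 2) 1 := by fun_prop (disch := norm_num)
    have hlt : ∀ᶠ t in 𝓝[<] (1 : ℝ), ν x / t ^ 2 < y :=
      hcont.tendsto.mono_left nhdsWithin_le_nhds |>.eventually (gt_mem_nhds (by simpa using hy))
    exact (Eventually.and (Ioo_mem_nhdsLT one_pos) hlt).exists
  obtain ⟨s, ⟨hs₀, hsr₀⟩, hsy⟩ :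
      ∃ s ∈ Ioo 0 r₀, ballDensityRatio μ x s / t ^ 2 + C * (t * s) < y := by
    have hlim : Tendsto (fun s => ballDensityRatio μ x s / t ^ 2 + C * (t * s)) (𝓝[>] 0)
        (𝓝 (ν x / t ^ 2 + C * (t * 0))) :=
      ((hν x hx).div_const _).add <|
        (Continuous.tendsto (by fun_prop) 0).mono_left nhdsWithin_le_nhds
    exact (Eventually.and (Ioo_mem_nhdsGT hr₀)
      (hlim.eventually (gt_mem_nhds (by simpa using hty)))).exists
  have hball : ball x ((1 - t) * s) ∈ 𝓝 x := ball_mem_nhds x (by nlinarith)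
  filter_upwards [self_mem_nhdsWithin, mem_nhdsWithin_of_mem_nhds hball] with z hzU hz
  calc ν z ≤ ballDensityRatio μ z (t * s) + C * (t * s) :=
        hle z hzU _ ⟨by positivity, by nlinarith⟩
    _ ≤ ballDensityRatio μ x s / t ^ 2 + C * (t * s) := by
        gcongr
        exact ballDensityRatio_le_of_dist_le μ (mem_ball.1 hz).le
    _ < y := hsy

end BallDensityRatio

theorem density_upperSemicontinuous_of_almost_monotone_general
    (d : ℕ) (μ : Measure (EuclideanSpace ℝ (Fin d))) [IsFiniteMeasure μ]
    (U : Set (EuclideanSpace ℝ (Fin d)))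
    (r₀ C : ℝ) (hr₀ : 0 < r₀) (hC : 0 ≤ C)
    (hmon : ∀ x ∈ U, ∃ R : ℝ → ℝ, MonotoneOn R (Set.Ioo 0 r₀) ∧
      ∀ r ∈ Set.Ioo (0 : ℝ) r₀,
        |(μ (ball x r)).toReal / (π * r ^ 2) - R r| ≤ C * r) :
    ∃ ν : EuclideanSpace ℝ (Fin d) → ℝ,
      (∀ x ∈ U, Tendsto (fun r : ℝ => (μ (ball x r)).toReal / (π * r ^ 2))
        (nhdsWithin 0 (Set.Ioi 0)) (nhds (ν x))) ∧
      UpperSemicontinuousOn ν U := by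
  have hlimit : ∀ x ∈ U, ∃ L, Tendsto (ballDensityRatio μ x) (𝓝[>] 0) (𝓝 L) ∧
      ∀ r ∈ Ioo 0 r₀, L ≤ ballDensityRatio μ x r + C * r := by
    intro x hx
    obtain ⟨R, hR, hfR⟩ := hmon x hx
    exact exists_tendsto_nhdsGT_zero_of_abs_sub_le_of_monotoneOn hr₀ hC hR
      (fun r _ => ballDensityRatio_nonneg μ x r) hfR
  choose! ν hν_lim hν_le using hlimit
  exact ⟨ν, hν_lim, upperSemicontinuousOn_of_le_ballDensityRatio_add μ hr₀ hν_lim hν_le⟩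

/-- **Upper semicontinuity of the density.**
If a finite Borel measure `μ` on `ℝ^d` is almost monotone at every point of
an open set `U` with the same constants `r₀ > 0` and `C ≥ 0` (independent of
the point), then the density `ν(x) = lim_{r→0⁺} μ(B(x,r))/(π r²)` is well
defined and upper semicontinuous on `U`. -/
theorem density_upperSemicontinuous_of_almost_monotone
    (d : ℕ) (μ : Measure (EuclideanSpace ℝ (Fin d))) [IsFiniteMeasure μ]
    (U : Set (EuclideanSpace ℝ (Fin d))) (hU : IsOpen U)
    (r₀ C : ℝ) (hr₀ : 0 < r₀) (hC : 0 ≤ C)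
    (hmon : ∀ x ∈ U, ∃ R : ℝ → ℝ, MonotoneOn R (Set.Ioo 0 r₀) ∧
      ∀ r ∈ Set.Ioo (0 : ℝ) r₀,
        |(μ (ball x r)).toReal / (π * r ^ 2) - R r| ≤ C * r) :
    ∃ ν : EuclideanSpace ℝ (Fin d) → ℝ,
      (∀ x ∈ U, Tendsto (fun r : ℝ => (μ (ball x r)).toReal / (π * r ^ 2))
        (nhdsWithin 0 (Set.Ioi 0)) (nhds (ν x))) ∧
      UpperSemicontinuousOn ν U :=
  density_upperSemicontinuous_of_almost_monotone_general d μ U r₀ C hr₀ hC hmon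
end
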